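/- arXiv:1808.01528 — 2 statements merged into one kernel-verified Lean document; each statement's English description precedes it below -/
import Mathlib

section
/- Let j be a nonnegative integer and suppose m = 2^L·h + 1, where L ≥ 3 is an integer and h is an odd positive integer. Let ℓ = ⌈log₂(m+j)⌉ (the least nonnegative integer with m + j ≤ 2^ℓ), and assume j < 2^{ℓ−1}. Then, as real numbers, 𝔎_j(m) ≤ 2^ℓ + 2^{ℓ+1}·(2^ℓ + 2 + j)/(2^{ℓ−1} − j). -/
/-- The Thue–Morse word, 1-indexed: `tm i` is the parity (0 or 1) of the number of 1's
in the binary expansion of `i - 1`. -/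
def tm (i : ℕ) : ℕ := ((Nat.digits 2 (i - 1)).sum) % 2

/-- The `r`-th block (0-indexed) of size `m` of the `j`-fix of the Thue–Morse word:
the factor `⟨j + r*m + 1, j + (r+1)*m⟩`. -/
def tmBlock (j m r : ℕ) : List ℕ := (List.range m).map fun i => tm (j + r * m + i + 1)

/-- The `j`-fix of the Thue–Morse word of length `k*m` is a `k`-anti-power, i.e. the
`k` blocks `⟨j + r*m + 1, j + (r+1)*m⟩` for `0 ≤ r ≤ k-1` are pairwise distinct. -/
def IsAntipowerJfix (j k m : ℕ) : Prop :=
  ∀ r₁ < k, ∀ r₂ < k, tmBlock j m r₁ = tmBlock j m r₂ → r₁ = r₂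

/-- `gammaJ j k` is the least positive integer `m` such that the `j`-fix of the
Thue–Morse word of length `k*m` is a `k`-anti-power. -/
noncomputable def gammaJ (j k : ℕ) : ℕ := sInf {m : ℕ | 0 < m ∧ IsAntipowerJfix j k m}

/-- `KJ j m` is the least positive integer `k` such that the `j`-fix of the
Thue–Morse word of length `k*m` is not a `k`-anti-power. -/
noncomputable def KJ (j m : ℕ) : ℕ := sInf {k : ℕ | 0 < k ∧ ¬ IsAntipowerJfix j k m}

/-- `GammaJ j k` is the supremum (in `ℕ`, with `sSup ∅ = 0` and `sSup` of an unbounded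
set `= 0`) of the set of odd positive integers `m` such that the `j`-fix of the
Thue–Morse word of length `k*m` is not a `k`-anti-power. -/
noncomputable def GammaJ (j k : ℕ) : ℕ := sSup {m : ℕ | Odd m ∧ ¬ IsAntipowerJfix j k m}

/-- Binary digit sum. -/
def S2 (n : ℕ) : ℕ := (Nat.digits 2 n).sum

lemma S2_def (n : ℕ) : S2 n = n % 2 + S2 (n / 2) := by
  rcases Nat.eq_zero_or_pos n with h | h
  · simp [S2, h]
  · rw [S2, Nat.digits_def' (by norm_num : 1 < 2) h, List.sum_cons, S2]

lemma S2_add_mul_pow : ∀ p i0 c : ℕ, i0 < 2 ^ p → S2 (i0 + c * 2 ^ p) = S2 i0 + S2 c := by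
  intro p
  induction p with
  | zero =>
    intro i0 c h
    interval_cases i0
    simp [S2]
  | succ p ih =>
    intro i0 c h
    have h2 : i0 + c * 2 ^ (p + 1) = i0 + c * 2 ^ p * 2 := by ring
    have hdiv : (i0 + c * 2 ^ p * 2) / 2 = i0 / 2 + c * 2 ^ p :=
      Nat.add_mul_div_right i0 (c * 2 ^ p) (by norm_num)
    have hmod : (i0 + c * 2 ^ p * 2) % 2 = i0 % 2 := by omega
    have hlt : i0 / 2 < 2 ^ p := by
      have : 2 ^ (p + 1) = 2 ^ p * 2 := by ring
      omega
    rw [h2, S2_def (i0 + c * 2 ^ p * 2), hmod, hdiv, ih _ c hlt, S2_def i0]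
    ring

lemma tm_eq (n : ℕ) : tm (n + 1) = S2 n % 2 := by simp [tm, S2]

lemma block_eq (j m ℓ q r₁ : ℕ) (hmN : m ≤ 2 ^ ℓ) (ha : j + r₁ * m = q * 2 ^ ℓ)
    (i i' : ℕ) (hpar : S2 (q + i * m) % 2 = S2 (q + i' * m) % 2) :
    tmBlock j m (r₁ + i * 2 ^ ℓ) = tmBlock j m (r₁ + i' * 2 ^ ℓ) := by
  unfold tmBlock
  apply List.map_congr_left
  intro i0 hi0
  rw [List.mem_range] at hi0
  have key : ∀ i'' : ℕ, tm (j + (r₁ + i'' * 2 ^ ℓ) * m + i0 + 1) = (S2 i0 + S2 (q + i'' * m)) % 2 := by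
    intro i''
    have harg : j + (r₁ + i'' * 2 ^ ℓ) * m + i0 = i0 + (q + i'' * m) * 2 ^ ℓ := by
      have : (r₁ + i'' * 2 ^ ℓ) * m = r₁ * m + i'' * m * 2 ^ ℓ := by ring
      rw [this]
      have : (q + i'' * m) * 2 ^ ℓ = q * 2 ^ ℓ + i'' * m * 2 ^ ℓ := by ring
      omega
    rw [harg, tm_eq, S2_add_mul_pow ℓ i0 (q + i'' * m) (lt_of_lt_of_le hi0 hmN)]
  rw [key i, key i', Nat.add_mod, hpar, ← Nat.add_mod]

theorem KJ_le_three_pow (j m ℓ : ℕ) (hodd : Odd m) (hm1 : 0 < m) (hmN : m ≤ 2 ^ ℓ) :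
    KJ j m ≤ 3 * 2 ^ ℓ := by
  set N := 2 ^ ℓ with hN
  have hNpos : 0 < N := Nat.pow_pos (by norm_num)
  haveI : NeZero N := ⟨hNpos.ne'⟩
  have hcop : Nat.Coprime m N := (Nat.coprime_two_right.mpr hodd).pow_right ℓ
  -- choose r₁
  set x : ZMod N := (-(j : ZMod N)) * (m : ZMod N)⁻¹ with hx
  set r₁ : ℕ := x.val with hr₁
  have hr₁lt : r₁ < N := x.val_lt
  have hdvd : N ∣ j + r₁ * m := by
    have : ((j + r₁ * m : ℕ) : ZMod N) = 0 := by
      push_cast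
      rw [ZMod.natCast_val, ZMod.cast_id, hx]
      have h1 : (m : ZMod N) * (m : ZMod N)⁻¹ = 1 := ZMod.coe_mul_inv_eq_one m hcop
      calc (j : ZMod N) + -(j : ZMod N) * (m : ZMod N)⁻¹ * (m : ZMod N)
          = (j : ZMod N) + -(j : ZMod N) * ((m : ZMod N) * (m : ZMod N)⁻¹) := by ring
        _ = 0 := by rw [h1]; ring
    exact (ZMod.natCast_eq_zero_iff _ _).mp this
  obtain ⟨q, hq⟩ := hdvd
  have ha : j + r₁ * m = q * N := by rw [hq, Nat.mul_comm]
  -- pigeonhole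
  have h0 := Nat.mod_two_eq_zero_or_one (S2 (q + 0 * m))
  have h1 := Nat.mod_two_eq_zero_or_one (S2 (q + 1 * m))
  have h2 := Nat.mod_two_eq_zero_or_one (S2 (q + 2 * m))
  have hpair : ∃ i i' : ℕ, i < i' ∧ i' ≤ 2 ∧ S2 (q + i * m) % 2 = S2 (q + i' * m) % 2 := by
    by_cases e01 : S2 (q + 0 * m) % 2 = S2 (q + 1 * m) % 2
    · exact ⟨0, 1, by omega, by omega, e01⟩
    by_cases e02 : S2 (q + 0 * m) % 2 = S2 (q + 2 * m) % 2
    · exact ⟨0, 2, by omega, by omega, e02⟩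
    exact ⟨1, 2, by omega, by omega, by omega⟩
  obtain ⟨i, i', hii', hi'2, hpar⟩ := hpair
  have hblocks := block_eq j m ℓ q r₁ hmN ha i i' hpar
  have hnot : ¬ IsAntipowerJfix j (3 * N) m := by
    intro H
    have hrlt : r₁ + i * N < 3 * N := by nlinarith
    have hrlt' : r₁ + i' * N < 3 * N := by nlinarith
    have := H _ hrlt _ hrlt' hblocks
    have : i * N = i' * N := by omega
    have : i = i' := Nat.eq_of_mul_eq_mul_right hNpos this
    omega
  exact Nat.sInf_le ⟨by positivity, hnot⟩

theorem KJ_le_one_mod_eight_uniform (j L h m ℓ : ℕ) (hL : 3 ≤ L) (hh : Odd h)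
    (hh' : 0 < h) (hm : m = 2 ^ L * h + 1)
    (hℓ : IsLeast {l : ℕ | m + j ≤ 2 ^ l} ℓ)
    (hj : j < 2 ^ (ℓ - 1)) :
    (KJ j m : ℝ) ≤ 2 ^ ℓ + (2 : ℝ) ^ (ℓ + 1) * ((2 : ℝ) ^ ℓ + 2 + j) / ((2 : ℝ) ^ (ℓ - 1) - j) := by
  have hmem : m + j ≤ 2 ^ ℓ := hℓ.1
  have h2L : 2 ∣ 2 ^ L := dvd_pow_self 2 (by omega)
  have hodd : Odd m := by
    obtain ⟨c, hc⟩ := h2L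
    exact ⟨c * h, by rw [hm, hc]; ring⟩
  have hm9 : 9 ≤ m := by
    have h8 : 2 ^ 3 ≤ 2 ^ L := Nat.pow_le_pow_right (by norm_num) hL
    have h1h : 2 ^ L * 1 ≤ 2 ^ L * h := Nat.mul_le_mul_left _ hh'
    norm_num at h8
    omega
  have hℓ1 : 1 ≤ ℓ := by
    rcases Nat.eq_zero_or_pos ℓ with h0 | h0
    · rw [h0] at hmem; norm_num at hmem; omega
    · exact h0
  have hKJ : KJ j m ≤ 3 * 2 ^ ℓ := KJ_le_three_pow j m ℓ hodd (by omega) (by omega)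
  have hX : (0:ℝ) < 2 ^ ℓ := by positivity
  have hjr : (j : ℝ) < (2:ℝ) ^ (ℓ - 1) := by
    have := (Nat.cast_lt (α := ℝ)).mpr hj
    push_cast at this
    exact this
  have hd : (0:ℝ) < (2:ℝ) ^ (ℓ - 1) - j := by linarith
  have h1 : (2:ℝ) ^ (ℓ - 1) ≤ 2 ^ ℓ := pow_le_pow_right₀ (by norm_num) (Nat.sub_le ℓ 1)
  have key : 2 * (2:ℝ) ^ ℓ ≤ (2:ℝ) ^ (ℓ + 1) * ((2:ℝ) ^ ℓ + 2 + j) / ((2:ℝ) ^ (ℓ - 1) - j) := by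
    rw [le_div_iff₀ hd]
    have hpe : (2:ℝ) ^ (ℓ + 1) = 2 * 2 ^ ℓ := by ring
    rw [hpe]
    have hj0 : (0:ℝ) ≤ j := Nat.cast_nonneg j
    nlinarith
  have hcast : (KJ j m : ℝ) ≤ 3 * 2 ^ ℓ := by
    calc (KJ j m : ℝ) ≤ ((3 * 2 ^ ℓ : ℕ) : ℝ) := Nat.cast_le.mpr hKJ
      _ = 3 * 2 ^ ℓ := by push_cast; ring
  linarith
end

section
/- For every integer ℓ ≥ 3 and every nonnegative integer j the following two lower bounds hold, as inequalities of real numbers: 𝔎_j(3·2^{ℓ−2} + 1) > (5·2^{2ℓ−3} − j)/(3·2^{ℓ−2} + 1), and 𝔎_j(2^{ℓ−1} + 3) > (2^{2ℓ−2} − j)/(2^{ℓ−1} + 3). -/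
def s (n : ℕ) : ℕ := (Nat.digits 2 n).sum % 2

lemma s_lt_two (n : ℕ) : s n < 2 := Nat.mod_lt _ (by norm_num)

lemma s_two_mul (n : ℕ) : s (2 * n) = s n := by
  rcases Nat.eq_zero_or_pos n with h | h
  · simp [h]
  · unfold s
    rw [Nat.digits_def' (by norm_num : 1 < 2) (by omega)]
    simp [Nat.mul_div_cancel_left _ (by norm_num : 0 < 2), Nat.mul_mod_right]

lemma s_two_mul_add_one (n : ℕ) : s (2 * n + 1) = (s n + 1) % 2 := by
  unfold s
  rw [Nat.digits_def' (by norm_num : 1 < 2) (by omega)]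
  have h1 : (2 * n + 1) % 2 = 1 := by omega
  have h2 : (2 * n + 1) / 2 = n := by omega
  rw [h1, h2]
  simp [Nat.add_mod, Nat.add_comm]

lemma s_pow_add : ∀ (k x : ℕ), x < 2 ^ k → s (2 ^ k + x) = (s x + 1) % 2 := by
  intro k
  induction k with
  | zero =>
    intro x hx
    interval_cases x
    simp [s]
  | succ k ih =>
    intro x hx
    rcases Nat.even_or_odd x with ⟨q, hq⟩ | ⟨q, hq⟩
    · subst hq
      have hq2 : q < 2 ^ k := by rw [pow_succ] at hx; omega
      have e1 : 2 ^ (k+1) + (q + q) = 2 * (2 ^ k + q) := by ring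
      have e2 : q + q = 2 * q := by ring
      rw [e1, e2, s_two_mul, s_two_mul, ih q hq2]
    · subst hq
      have hq2 : q < 2 ^ k := by rw [pow_succ] at hx; omega
      have : 2 ^ (k+1) + (2 * q + 1) = 2 * (2 ^ k + q) + 1 := by ring
      rw [this, s_two_mul_add_one, ih q hq2, s_two_mul_add_one]

lemma no_triple (t : ℕ) : ¬ (s t = s (t+1) ∧ s (t+1) = s (t+2)) := by
  rintro ⟨h1, h2⟩
  rcases Nat.even_or_odd t with ⟨u, hu⟩ | ⟨u, hu⟩
  · subst hu
    have e1 : u + u = 2 * u := by ring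
    have e2 : u + u + 1 = 2 * u + 1 := by ring
    rw [e2, e1, s_two_mul, s_two_mul_add_one] at h1
    have := s_lt_two u
    omega
  · subst hu
    have e2 : 2 * u + 1 + 1 = 2 * (u+1) := by ring
    have e3 : 2 * u + 1 + 2 = 2 * (u+1) + 1 := by ring
    rw [e2, e3, s_two_mul, s_two_mul_add_one] at h2
    have := s_lt_two (u+1)
    omega

def Agr (a d M : ℕ) : Prop := ∀ i < M, s (a + i) = s (a + d + i)

lemma agr_mono {a d M M' : ℕ} (h : Agr a d M) (hM : M' ≤ M) : Agr a d M' :=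
  fun i hi => h i (lt_of_lt_of_le hi hM)

lemma agr_halve {a d M : ℕ} (h : Agr a (2 * d) M) : Agr (a / 2) d ((M + 1) / 2) := by
  intro i hi
  set t := a / 2 + i with ht
  by_cases hc : a ≤ 2 * t
  · have hn : 2 * t < a + M := by omega
    have := h (2 * t - a) (by omega)
    have e : a + (2 * t - a) = 2 * t := by omega
    rw [e] at this
    have e2 : a + 2 * d + (2 * t - a) = 2 * (t + d) := by omega
    rw [e2, s_two_mul, s_two_mul] at this
    rw [show a / 2 + d + i = t + d from by omega]
    exact this
  · -- a odd, t = a/2, 2t+1 = a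
    have ha : 2 * t + 1 = a := by omega
    have := h 0 (by omega)
    simp at this
    rw [← ha] at this
    have e2 : 2 * t + 1 + 2 * d = 2 * (t + d) + 1 := by ring
    rw [e2, s_two_mul_add_one, s_two_mul_add_one] at this
    rw [show a / 2 + d + i = t + d from by omega]
    have h1 := s_lt_two t
    have h2 := s_lt_two (t + d)
    omega

lemma agr_odd {a d : ℕ} (hd : d % 2 = 1) (h : Agr a d 4) : False := by
  obtain ⟨c, hc⟩ : ∃ c, d = 2 * c + 1 := ⟨d / 2, by omega⟩
  subst hc
  rcases Nat.even_or_odd a with ⟨u, hu⟩ | ⟨u, hu⟩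
  · -- a = 2u
    have h0 := h 0 (by norm_num)
    have h1 := h 1 (by norm_num)
    have h2 := h 2 (by norm_num)
    have h3 := h 3 (by norm_num)
    subst hu
    have e0 : u + u + 0 = 2 * u := by ring
    have e0' : u + u + (2*c+1) + 0 = 2 * (u + c) + 1 := by ring
    have e1 : u + u + 1 = 2 * u + 1 := by ring
    have e1' : u + u + (2*c+1) + 1 = 2 * (u + c + 1) := by ring
    have e2 : u + u + 2 = 2 * (u+1) := by ring
    have e2' : u + u + (2*c+1) + 2 = 2 * (u + c + 1) + 1 := by ring
    have e3 : u + u + 3 = 2 * (u+1) + 1 := by ring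
    have e3' : u + u + (2*c+1) + 3 = 2 * (u + c + 2) := by ring
    rw [e0, e0', s_two_mul, s_two_mul_add_one] at h0
    rw [e1, e1', s_two_mul_add_one, s_two_mul] at h1
    rw [e2, e2', s_two_mul, s_two_mul_add_one] at h2
    rw [e3, e3', s_two_mul_add_one, s_two_mul] at h3
    have l1 := s_lt_two u
    have l2 := s_lt_two (u+1)
    have l3 := s_lt_two (u+c)
    have l4 := s_lt_two (u+c+1)
    have l5 := s_lt_two (u+c+2)
    exact no_triple (u+c) (by omega)
  · -- a = 2u+1
    have h0 := h 0 (by norm_num)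
    have h1 := h 1 (by norm_num)
    have h2 := h 2 (by norm_num)
    have h3 := h 3 (by norm_num)
    subst hu
    have e0 : 2*u+1 + 0 = 2 * u + 1 := by ring
    have e0' : 2*u+1 + (2*c+1) + 0 = 2 * (u + c + 1) := by ring
    have e1 : 2*u+1 + 1 = 2 * (u+1) := by ring
    have e1' : 2*u+1 + (2*c+1) + 1 = 2 * (u + c + 1) + 1 := by ring
    have e2 : 2*u+1 + 2 = 2 * (u+1) + 1 := by ring
    have e2' : 2*u+1 + (2*c+1) + 2 = 2 * (u + c + 2) := by ring
    have e3 : 2*u+1 + 3 = 2 * (u+2) := by ring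
    have e3' : 2*u+1 + (2*c+1) + 3 = 2 * (u + c + 2) + 1 := by ring
    rw [e0, e0', s_two_mul_add_one, s_two_mul] at h0
    rw [e1, e1', s_two_mul, s_two_mul_add_one] at h1
    rw [e2, e2', s_two_mul_add_one, s_two_mul] at h2
    rw [e3, e3', s_two_mul, s_two_mul_add_one] at h3
    have l1 := s_lt_two u
    have l2 := s_lt_two (u+1)
    have l3 := s_lt_two (u+2)
    have l4 := s_lt_two (u+c+1)
    have l5 := s_lt_two (u+c+2)
    exact no_triple u (by omega)

lemma agr_even {a d M : ℕ} (h4 : 4 ≤ M) (h : Agr a d M) : d % 2 = 0 := by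
  rcases Nat.mod_two_eq_zero_or_one d with h0 | h1
  · exact h0
  · exact absurd (agr_odd h1 (agr_mono h h4)) (fun x => x)

lemma agr_chain : ∀ (i : ℕ), ∀ (a d M : ℕ), 3 * 2 ^ i ≤ M - 1 → Agr a d M →
    2 ^ i ∣ d ∧ Agr (a / 2 ^ i) (d / 2 ^ i) ((M - 1) / 2 ^ i + 1) := by
  intro i
  induction i with
  | zero =>
    intro a d M hM h
    simp only [pow_zero, Nat.div_one, one_dvd, true_and]
    exact agr_mono h (by omega)
  | succ i ih =>
    intro a d M hM h
    have h2 : 2 ^ (i+1) = 2 * 2 ^ i := by ring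
    have hM4 : 4 ≤ M := by
      have : (1:ℕ) ≤ 2 ^ i := Nat.one_le_two_pow
      omega
    have hde : d % 2 = 0 := agr_even hM4 h
    obtain ⟨d', hd'⟩ : ∃ d', d = 2 * d' := ⟨d / 2, by omega⟩
    subst hd'
    have hh := agr_halve h
    have hM' : 3 * 2 ^ i ≤ (M + 1) / 2 - 1 := by
      have : (1:ℕ) ≤ 2 ^ i := Nat.one_le_two_pow
      omega
    obtain ⟨hdvd, hagr⟩ := ih (a / 2) d' ((M + 1) / 2) hM' hh
    constructor
    · rw [h2]
      exact Nat.mul_dvd_mul_left 2 hdvd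
    · have ea : a / 2 / 2 ^ i = a / 2 ^ (i+1) := by
        rw [Nat.div_div_eq_div_mul, h2, Nat.mul_comm]
      have ed : 2 * d' / 2 ^ (i+1) = d' / 2 ^ i := by
        rw [h2, Nat.mul_comm 2 (2^i), Nat.mul_comm 2 d']
        exact Nat.mul_div_mul_right _ _ (by norm_num)
      have eM : ((M + 1) / 2 - 1) / 2 ^ i = (M - 1) / 2 ^ (i+1) := by
        have e1 : (M + 1) / 2 - 1 = (M - 1) / 2 := by omega
        rw [e1, Nat.div_div_eq_div_mul, h2, Nat.mul_comm]
      rw [← ea, ed, ← eM]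
      exact hagr

lemma period2 (A : ℕ) (h : Agr A 2 4) : False := by
  have hh := agr_halve (show Agr A (2 * 1) 4 from h)
  have h0 := hh 0 (by norm_num)
  have h1 := hh 1 (by norm_num)
  simp only [Nat.add_zero] at h0
  exact no_triple (A / 2) ⟨by simpa using h0, by
    have e1 : A / 2 + 1 + 1 = A / 2 + 2 := by omega
    have e2 : A / 2 + 1 = A/2 + 1 := rfl
    simpa [Nat.add_assoc] using h1⟩

lemma dist3 (A : ℕ) (h : ∀ i < 3, s (A + i) = (s (A + i + 3) + 1) % 2) : False := by
  have h0 := h 0 (by norm_num)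
  have h1 := h 1 (by norm_num)
  have h2 := h 2 (by norm_num)
  rcases Nat.even_or_odd A with ⟨w, hw⟩ | ⟨w, hw⟩
  · subst hw
    have e0 : w + w + 0 = 2 * w := by ring
    have e0' : w + w + 0 + 3 = 2 * (w + 1) + 1 := by ring
    have e2 : w + w + 2 = 2 * (w + 1) := by ring
    have e2' : w + w + 2 + 3 = 2 * (w + 2) + 1 := by ring
    rw [e0', e0, s_two_mul, s_two_mul_add_one] at h0
    rw [e2', e2, s_two_mul, s_two_mul_add_one] at h2
    have l1 := s_lt_two w
    have l2 := s_lt_two (w+1)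
    have l3 := s_lt_two (w+2)
    exact no_triple w (by omega)
  · subst hw
    have e0 : 2*w+1 + 0 = 2 * w + 1 := by ring
    have e0' : 2*w+1 + 0 + 3 = 2 * (w + 2) := by ring
    have e1 : 2*w+1 + 1 = 2 * (w+1) := by ring
    have e1' : 2*w+1 + 1 + 3 = 2 * (w + 2) + 1 := by ring
    have e2 : 2*w+1 + 2 = 2 * (w+1) + 1 := by ring
    have e2' : 2*w+1 + 2 + 3 = 2 * (w + 3) := by ring
    rw [e0', e0, s_two_mul_add_one, s_two_mul] at h0
    rw [e1', e1, s_two_mul, s_two_mul_add_one] at h1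
    rw [e2', e2, s_two_mul_add_one, s_two_mul] at h2
    have l1 := s_lt_two w
    have l2 := s_lt_two (w+1)
    have l3 := s_lt_two (w+2)
    have l4 := s_lt_two (w+3)
    exact no_triple w (by omega)

lemma s_shift1 {e x : ℕ} (hx : x < 2 ^ (e+2)) :
    s (x + (2 ^ (e+1) + 2 ^ (e+2))) = s x := by
  by_cases hc : x < 2 ^ (e+1)
  · have e1 : x + (2 ^ (e+1) + 2 ^ (e+2)) = 2 ^ (e+2) + (2 ^ (e+1) + x) := by ring
    have hb : 2 ^ (e+1) + x < 2 ^ (e+2) := by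
      have : 2 ^ (e+2) = 2 * 2 ^ (e+1) := by ring
      omega
    rw [e1, s_pow_add _ _ hb]
    have e2 : 2 ^ (e+1) + x = 2 ^ (e+1) + x := rfl
    rw [show (2:ℕ) ^ (e+1) + x = 2 ^ (e+1) + x from rfl, s_pow_add _ _ hc]
    have := s_lt_two x
    omega
  · obtain ⟨c, hc2⟩ : ∃ c, x = 2 ^ (e+1) + c := ⟨x - 2^(e+1), by omega⟩
    have hcb : c < 2 ^ (e+1) := by
      have : 2 ^ (e+2) = 2 * 2 ^ (e+1) := by ring
      omega
    subst hc2
    have e1 : 2 ^ (e+1) + c + (2 ^ (e+1) + 2 ^ (e+2)) = 2 ^ (e+3) + c := by ring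
    have hcb3 : c < 2 ^ (e+3) := by
      have : 2 ^ (e+1) ≤ 2 ^ (e+3) := Nat.pow_le_pow_right (by norm_num) (by omega)
      omega
    rw [e1, s_pow_add _ _ hcb3, s_pow_add _ _ hcb]

lemma noRep1 (e a u : ℕ) (he : 1 ≤ e) (hu : 1 ≤ u)
    (hpos : a + u * (3 * 2 ^ e + 1) + (3 * 2 ^ e + 1) ≤ 5 * 2 ^ (2 * e + 1))
    (h : Agr a (u * (3 * 2 ^ e + 1)) (3 * 2 ^ e + 1)) : False := by
  set m := 3 * 2 ^ e + 1 with hm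
  set d := u * m with hd
  have hE1 : (1:ℕ) ≤ 2 ^ e := Nat.one_le_two_pow
  -- chain down e levels
  have hwin : (m - 1) / 2 ^ e + 1 = 4 := by
    have : m - 1 = 3 * 2 ^ e := by omega
    rw [this, Nat.mul_div_cancel _ (by positivity)]
  obtain ⟨hdvd, hagr⟩ := agr_chain e a d m (by omega) h
  rw [hwin] at hagr
  -- the level-e distance is even
  have heven : (d / 2 ^ e) % 2 = 0 := agr_even (le_refl 4) hagr
  obtain ⟨q, hq⟩ := hdvd
  have hqd : d / 2 ^ e = q := by rw [hq, Nat.mul_div_cancel_left _ (by positivity)]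
  rw [hqd] at heven hagr
  obtain ⟨q', hq'⟩ : ∃ q', q = 2 * q' := ⟨q / 2, by omega⟩
  -- 2^(e+1) divides u
  have hdvdu : 2 ^ (e+1) ∣ u := by
    have hdd : 2 ^ (e+1) ∣ u * m := by
      rw [← hd, hq, hq']
      exact ⟨q', by ring⟩
    have hcop : (Nat.Coprime (2 ^ (e+1)) m) := by
      apply Nat.Coprime.pow_left
      rw [Nat.coprime_two_left]
      refine ⟨3 * 2 ^ (e-1), ?_⟩
      have : 2 ^ e = 2 * 2 ^ (e - 1) := by
        rw [← pow_succ']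
        congr 1
        omega
      omega
    exact (Nat.Coprime.dvd_of_dvd_mul_right hcop hdd)
  obtain ⟨t, ht⟩ := hdvdu
  have hE2 : (2:ℕ) ^ (e+1) = 2 * 2 ^ e := by ring
  -- abbreviations for omega
  obtain ⟨E, hE⟩ : ∃ E, 2 ^ e = E := ⟨_, rfl⟩
  obtain ⟨S, hS⟩ : ∃ S, E * E = S := ⟨_, rfl⟩
  have hSpow : 5 * 2 ^ (2 * e + 1) = 10 * S := by
    rw [← hS, ← hE]
    rw [show 2 * e + 1 = e + e + 1 from by omega]
    ring
  have ht1 : t = 1 := by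
    rcases Nat.lt_or_ge t 2 with h2 | h2
    · interval_cases t
      · omega
      · rfl
    · exfalso
      have hub : 2 ^ (e+1) * 2 * m ≤ u * m := by
        have : 2 ^ (e+1) * 2 ≤ u := by rw [ht]; exact Nat.mul_le_mul_left _ h2
        exact Nat.mul_le_mul_right _ this
      have hexp : 2 ^ (e+1) * 2 * m = 12 * S + 4 * E := by
        rw [hE2, hm, hE, ← hS]; ring
      omega
  have hu2 : u = 2 * 2 ^ e := by rw [ht, ht1, mul_one, hE2]
  -- level-e agreement with distance 2m
  have hq2m : q = 2 * m := by
    have : d = 2 ^ e * (2 * m) := by rw [hd, hu2]; ring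
    rw [this, Nat.mul_div_cancel_left _ (by positivity)] at hqd
    omega
  rw [hq2m] at hagr
  -- position bound : A ≤ 4E - 6
  set A := a / 2 ^ e with hA
  have hAa : A * E ≤ a := by rw [hA, ← hE]; exact Nat.div_mul_le_self a _
  have hposS : a + (6 * S + 2 * E) + (3 * E + 1) ≤ 10 * S := by
    have h1 : u * m = 6 * S + 2 * E := by rw [hu2, hm, hE, ← hS]; ring
    have h2 : m = 3 * E + 1 := by rw [hm, hE]
    omega
  have hAbound : A + 6 ≤ 4 * E := by
    by_contra hc
    push_neg at hc
    have h5 : 4 * E ≤ A + 5 := by omega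
    have : 4 * E * E ≤ (A + 5) * E := Nat.mul_le_mul_right _ h5
    have he1 : 4 * E * E = 4 * S := by rw [← hS]; ring
    have he2 : (A + 5) * E = A * E + 5 * E := by ring
    omega
  -- conclude: period 2 on window of length 4 at A
  apply period2 A
  intro i hi
  have hgi := hagr i hi
  have hx : A + i + 2 < 2 ^ (e + 2) := by
    have : (2:ℕ) ^ (e+2) = 4 * E := by rw [← hE]; ring
    omega
  have hsh := s_shift1 hx
  have heq : A + 2 * m + i = A + i + 2 + (2 ^ (e+1) + 2 ^ (e+2)) := by
    rw [hm]; ring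
  rw [heq, hsh] at hgi
  rw [show A + 2 + i = A + i + 2 from by ring]
  exact hgi

lemma noRep2 (f a u : ℕ) (hf : 2 ≤ f) (hu : 1 ≤ u)
    (hpos : a + u * (2 ^ f + 3) + (2 ^ f + 3) ≤ 2 ^ (2 * f))
    (h : Agr a (u * (2 ^ f + 3)) (2 ^ f + 3)) : False := by
  obtain ⟨g, rfl⟩ : ∃ g, f = g + 2 := ⟨f - 2, by omega⟩
  set m := 2 ^ (g+2) + 3 with hm
  set d := u * m with hd
  have hE1 : (1:ℕ) ≤ 2 ^ g := Nat.one_le_two_pow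
  have hf4 : (2:ℕ) ^ (g+2) = 4 * 2 ^ g := by ring
  -- chain down g levels
  obtain ⟨hdvd, hagr⟩ := agr_chain g a d m (by omega) h
  set W := (m - 1) / 2 ^ g + 1 with hW
  have hW5 : 5 ≤ W := by
    have h4 : 4 * 2 ^ g ≤ m - 1 := by omega
    have h6 : 4 ≤ (m - 1) / 2 ^ g :=
      (Nat.le_div_iff_mul_le (show 0 < 2 ^ g by positivity)).mpr h4
    rw [hW]
    omega
  have h4W : 4 ≤ W := by omega
  have heven : (d / 2 ^ g) % 2 = 0 := agr_even h4W hagr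
  obtain ⟨q, hq⟩ := hdvd
  have hqd : d / 2 ^ g = q := by rw [hq, Nat.mul_div_cancel_left _ (by positivity)]
  rw [hqd] at heven hagr
  obtain ⟨q', hq'⟩ : ∃ q', q = 2 * q' := ⟨q / 2, by omega⟩
  have hE2 : (2:ℕ) ^ (g+1) = 2 * 2 ^ g := by ring
  have hdvdu : 2 ^ (g+1) ∣ u := by
    have hdd : 2 ^ (g+1) ∣ u * m := by
      rw [← hd, hq, hq', hE2]
      exact ⟨q', by ring⟩
    have hcop : (Nat.Coprime (2 ^ (g+1)) m) := by
      apply Nat.Coprime.pow_left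
      rw [Nat.coprime_two_left]
      refine ⟨2 ^ (g+1) + 1, ?_⟩
      rw [hm, hE2, hf4]
      omega
    exact (Nat.Coprime.dvd_of_dvd_mul_right hcop hdd)
  obtain ⟨t, ht⟩ := hdvdu
  obtain ⟨E, hE⟩ : ∃ E, 2 ^ g = E := ⟨_, rfl⟩
  obtain ⟨S, hS⟩ : ∃ S, E * E = S := ⟨_, rfl⟩
  have hSpow : 2 ^ (2 * (g+2)) = 16 * S := by
    rw [← hS, ← hE, show 2 * (g+2) = g + g + 4 from by omega]; ring
  have hm4 : m = 4 * E + 3 := by rw [hm, hf4, hE]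
  have ht1 : t = 1 := by
    rcases Nat.lt_or_ge t 2 with h2 | h2
    · interval_cases t
      · rw [ht] at hu; omega
      · rfl
    · exfalso
      have hub : 2 ^ (g+1) * 2 * m ≤ u * m := by
        have : 2 ^ (g+1) * 2 ≤ u := by rw [ht]; exact Nat.mul_le_mul_left _ h2
        exact Nat.mul_le_mul_right _ this
      have hexp : 2 ^ (g+1) * 2 * m = 16 * S + 12 * E := by
        rw [hE2, hm4, hE, ← hS]; ring
      omega
  have hu2 : u = 2 * 2 ^ g := by rw [ht, ht1, mul_one, hE2]
  have hq2m : q = 2 * m := by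
    have : d = 2 ^ g * (2 * m) := by rw [hd, hu2]; ring
    rw [this, Nat.mul_div_cancel_left _ (by positivity)] at hqd
    omega
  rw [hq2m] at hagr
  -- halve once more
  have hagr2 := agr_halve hagr
  have hdd2 : a / 2 ^ g / 2 = a / 2 ^ (g+1) := by
    rw [Nat.div_div_eq_div_mul, show (2:ℕ) ^ g * 2 = 2 ^ (g+1) from by ring]
  rw [hdd2] at hagr2
  have hagr3 : Agr (a / 2 ^ (g+1)) m 3 := agr_mono hagr2 (by omega)
  set A := a / 2 ^ (g+1) with hA
  -- position bound
  have hAa : A * (2 * E) ≤ a := by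
    rw [hA, ← hE, show 2 * 2 ^ g = 2 ^ (g+1) from by ring]
    exact Nat.div_mul_le_self a _
  have hposS : a + (8 * S + 6 * E) + (4 * E + 3) ≤ 16 * S := by
    have h1 : u * m = 8 * S + 6 * E := by rw [hu2, hm4, hE, ← hS]; ring
    omega
  have hAbound : A + 6 ≤ 4 * E := by
    by_contra hc
    push_neg at hc
    have h5 : 4 * E ≤ A + 5 := by omega
    have hmul : (4 * E) * E ≤ (A + 5) * E := Nat.mul_le_mul_right _ h5
    have he1 : (4 * E) * E = 4 * S := by rw [← hS]; ring
    have he2 : (A + 5) * E = A * E + 5 * E := by ring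
    have he3 : A * (2 * E) = 2 * (A * E) := by ring
    omega
  -- conclude with dist3
  apply dist3 A
  intro i hi
  have hgi := hagr3 i hi
  have hx : A + i + 3 < 2 ^ (g+2) := by
    rw [hf4, hE]; omega
  have heq : A + m + i = 2 ^ (g+2) + (A + i + 3) := by rw [hm]; ring
  rw [heq, s_pow_add _ _ hx] at hgi
  exact hgi

lemma tm_succ (n : ℕ) : tm (n + 1) = s n := by simp [tm, s]

lemma tm_lt_two (i : ℕ) : tm i < 2 := Nat.mod_lt _ (by norm_num)

lemma tmBlock_length (j m r : ℕ) : (tmBlock j m r).length = m := by simp [tmBlock]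

lemma blocks_agr {j m r₁ r₂ : ℕ} (hlt : r₁ < r₂) (h : tmBlock j m r₁ = tmBlock j m r₂) :
    Agr (j + r₁ * m) ((r₂ - r₁) * m) m := by
  intro i hi
  have e1 : (tmBlock j m r₁)[i]'(by rw [tmBlock_length]; exact hi)
      = tm (j + r₁ * m + i + 1) := by simp [tmBlock]
  have e2 : (tmBlock j m r₂)[i]'(by rw [tmBlock_length]; exact hi)
      = tm (j + r₂ * m + i + 1) := by simp [tmBlock]
  have e3 : (tmBlock j m r₁)[i]'(by rw [tmBlock_length]; exact hi)
      = (tmBlock j m r₂)[i]'(by rw [tmBlock_length]; exact hi) := by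
    congr 1
  rw [e1, e2] at e3
  rw [tm_succ, tm_succ] at e3
  have hmul : r₁ * m ≤ r₂ * m := Nat.mul_le_mul_right _ (le_of_lt hlt)
  have hsub : (r₂ - r₁) * m = r₂ * m - r₁ * m := Nat.sub_mul _ _ _
  have he : j + r₁ * m + (r₂ - r₁) * m + i = j + r₂ * m + i := by omega
  rw [he]
  exact e3

lemma ofDigits_two_inj : ∀ (l₁ l₂ : List ℕ), l₁.length = l₂.length →
    (∀ x ∈ l₁, x < 2) → (∀ x ∈ l₂, x < 2) →
    Nat.ofDigits 2 l₁ = Nat.ofDigits 2 l₂ → l₁ = l₂ := by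
  intro l₁
  induction l₁ with
  | nil =>
    intro l₂ hlen _ _ _
    cases l₂ with
    | nil => rfl
    | cons b t => simp at hlen
  | cons a t ih =>
    intro l₂ hlen hb1 hb2 heq
    cases l₂ with
    | nil => simp at hlen
    | cons b t' =>
      rw [Nat.ofDigits_cons, Nat.ofDigits_cons] at heq
      have ha : a < 2 := hb1 a (by simp)
      have hbb : b < 2 := hb2 b (by simp)
      have hab : a = b ∧ Nat.ofDigits 2 t = Nat.ofDigits 2 t' := by
        constructor <;> omega
      obtain ⟨rfl, ht⟩ := hab
      have : t = t' := ih t' (by simpa using hlen)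
        (fun x hx => hb1 x (by simp [hx])) (fun x hx => hb2 x (by simp [hx])) ht
      rw [this]

lemma KJset_nonempty (j m : ℕ) : ∃ k, 0 < k ∧ ¬ IsAntipowerJfix j k m := by
  refine ⟨2 ^ m + 1, by positivity, ?_⟩
  intro hI
  have hmaps : ∀ r ∈ Finset.range (2 ^ m + 1),
      Nat.ofDigits 2 (tmBlock j m r) ∈ Finset.range (2 ^ m) := by
    intro r _
    rw [Finset.mem_range]
    have := Nat.ofDigits_lt_base_pow_length (b := 2) (l := tmBlock j m r)
      (by norm_num) (by
        intro x hx
        simp only [tmBlock, List.mem_map] at hx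
        obtain ⟨i, _, rfl⟩ := hx
        exact tm_lt_two _)
    rwa [tmBlock_length] at this
  obtain ⟨r₁, hr₁, r₂, hr₂, hne, heq⟩ :=
    Finset.exists_ne_map_eq_of_card_lt_of_maps_to
      (by simp) hmaps
  rw [Finset.mem_range] at hr₁ hr₂
  apply hne
  apply hI r₁ hr₁ r₂ hr₂
  exact ofDigits_two_inj _ _ (by rw [tmBlock_length, tmBlock_length])
    (by intro x hx; simp only [tmBlock, List.mem_map] at hx; obtain ⟨i, _, rfl⟩ := hx; exact tm_lt_two _)
    (by intro x hx; simp only [tmBlock, List.mem_map] at hx; obtain ⟨i, _, rfl⟩ := hx; exact tm_lt_two _)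
    heq

lemma antipower1 (e j k : ℕ) (he : 1 ≤ e)
    (hk : k * (3 * 2 ^ e + 1) + j ≤ 5 * 2 ^ (2 * e + 1)) :
    IsAntipowerJfix j k (3 * 2 ^ e + 1) := by
  intro r₁ h1 r₂ h2 heq
  by_contra hne
  have key : ∀ p q : ℕ, p < q → q < k →
      tmBlock (j) (3 * 2 ^ e + 1) p = tmBlock j (3 * 2 ^ e + 1) q → False := by
    intro p q hpq hqk hblocks
    apply noRep1 e (j + p * (3 * 2 ^ e + 1)) (q - p) he (by omega) ?_
      (blocks_agr hpq hblocks)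
    have hmul : (q + 1) * (3 * 2 ^ e + 1) ≤ k * (3 * 2 ^ e + 1) :=
      Nat.mul_le_mul_right _ (by omega)
    have hsub : (q - p) * (3 * 2 ^ e + 1) = q * (3 * 2 ^ e + 1) - p * (3 * 2 ^ e + 1) :=
      Nat.sub_mul _ _ _
    have hmul2 : p * (3 * 2 ^ e + 1) ≤ q * (3 * 2 ^ e + 1) :=
      Nat.mul_le_mul_right _ (le_of_lt hpq)
    have he2 : (q + 1) * (3 * 2 ^ e + 1) = q * (3 * 2 ^ e + 1) + (3 * 2 ^ e + 1) := by ring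
    omega
  rcases Nat.lt_or_ge r₁ r₂ with hlt | hge
  · exact key r₁ r₂ hlt h2 heq
  · exact key r₂ r₁ (by omega) h1 heq.symm

lemma antipower2 (f j k : ℕ) (hf : 2 ≤ f)
    (hk : k * (2 ^ f + 3) + j ≤ 2 ^ (2 * f)) :
    IsAntipowerJfix j k (2 ^ f + 3) := by
  intro r₁ h1 r₂ h2 heq
  by_contra hne
  have key : ∀ p q : ℕ, p < q → q < k →
      tmBlock j (2 ^ f + 3) p = tmBlock j (2 ^ f + 3) q → False := by
    intro p q hpq hqk hblocks
    apply noRep2 f (j + p * (2 ^ f + 3)) (q - p) hf (by omega) ?_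
      (blocks_agr hpq hblocks)
    have hmul : (q + 1) * (2 ^ f + 3) ≤ k * (2 ^ f + 3) :=
      Nat.mul_le_mul_right _ (by omega)
    have hsub : (q - p) * (2 ^ f + 3) = q * (2 ^ f + 3) - p * (2 ^ f + 3) :=
      Nat.sub_mul _ _ _
    have hmul2 : p * (2 ^ f + 3) ≤ q * (2 ^ f + 3) :=
      Nat.mul_le_mul_right _ (le_of_lt hpq)
    have he2 : (q + 1) * (2 ^ f + 3) = q * (2 ^ f + 3) + (2 ^ f + 3) := by ring
    omega
  rcases Nat.lt_or_ge r₁ r₂ with hlt | hge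
  · exact key r₁ r₂ hlt h2 heq
  · exact key r₂ r₁ (by omega) h1 heq.symm

lemma KJ_mem (j m : ℕ) : 0 < KJ j m ∧ ¬ IsAntipowerJfix j (KJ j m) m := by
  have h := Nat.sInf_mem (s := {k : ℕ | 0 < k ∧ ¬ IsAntipowerJfix j k m})
    (KJset_nonempty j m)
  exact h

theorem KJ_lower_bounds (ℓ j : ℕ) (hℓ : 3 ≤ ℓ) :
    (5 * (2 : ℝ) ^ (2 * ℓ - 3) - j) / (3 * 2 ^ (ℓ - 2) + 1) <
        (KJ j (3 * 2 ^ (ℓ - 2) + 1) : ℝ) ∧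
    ((2 : ℝ) ^ (2 * ℓ - 2) - j) / (2 ^ (ℓ - 1) + 3) < (KJ j (2 ^ (ℓ - 1) + 3) : ℝ) := by
  obtain ⟨e, rfl⟩ : ∃ e, ℓ = e + 2 := ⟨ℓ - 2, by omega⟩
  have he : 1 ≤ e := by omega
  rw [show 2 * (e + 2) - 3 = 2 * e + 1 from by omega,
      show e + 2 - 2 = e from by omega,
      show 2 * (e + 2) - 2 = 2 * (e + 1) from by omega,
      show e + 2 - 1 = e + 1 from by omega]
  constructor
  · obtain ⟨hKpos, hKnot⟩ := KJ_mem j (3 * 2 ^ e + 1)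
    have hnat : 5 * 2 ^ (2 * e + 1) <
        (KJ j (3 * 2 ^ e + 1)) * (3 * 2 ^ e + 1) + j := by
      by_contra hc
      push_neg at hc
      exact hKnot (antipower1 e j _ he hc)
    have hmpos : (0:ℝ) < 3 * 2 ^ e + 1 := by positivity
    rw [div_lt_iff₀ hmpos]
    have hR : (5 * 2 ^ (2 * e + 1) : ℝ) <
        (KJ j (3 * 2 ^ e + 1) : ℝ) * (3 * 2 ^ e + 1) + j := by
      exact_mod_cast hnat
    linarith
  · obtain ⟨hKpos, hKnot⟩ := KJ_mem j (2 ^ (e + 1) + 3)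
    have hnat : 2 ^ (2 * (e + 1)) <
        (KJ j (2 ^ (e + 1) + 3)) * (2 ^ (e + 1) + 3) + j := by
      by_contra hc
      push_neg at hc
      exact hKnot (antipower2 (e + 1) j _ (by omega) hc)
    have hmpos : (0:ℝ) < 2 ^ (e + 1) + 3 := by positivity
    rw [div_lt_iff₀ hmpos]
    have hR : ((2:ℝ) ^ (2 * (e + 1))) <
        (KJ j (2 ^ (e + 1) + 3) : ℝ) * (2 ^ (e + 1) + 3) + j := by
      exact_mod_cast hnat
    linarith
end
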